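/- arXiv:1311.2361 — 2 statements merged into one kernel-verified Lean document; each statement's English description precedes it below -/
import Mathlib

section
/- Let A be an n-by-n complex matrix and j > a(A) a positive integer. If A, A², …, A^j are all partial isometries, then A^ℓ is a partial isometry for every integer ℓ ≥ 1. -/
open Matrix

noncomputable section

/-- An `ι`-by-`ι` complex matrix `A` is a *partial isometry* if `‖Ax‖ = ‖x‖` for every
vector `x` in the orthogonal complement of `ker A` (Euclidean structure). -/
def Matrix.IsPartialIsometry {ι : Type*} [Fintype ι] [DecidableEq ι]
    (A : Matrix ι ι ℂ) : Prop :=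
  ∀ x ∈ (LinearMap.ker (Matrix.toEuclideanLin A))ᗮ, ‖Matrix.toEuclideanLin A x‖ = ‖x‖

/-- The *power partial isometry index* `p(A)`: the supremum (in `ℕ∞`, possibly `⊤`) of the
nonnegative integers `j` such that `I, A, A², …, A^j` are all partial isometries. -/
def Matrix.pIndex {ι : Type*} [Fintype ι] [DecidableEq ι] (A : Matrix ι ι ℂ) : ℕ∞ :=
  sSup ((↑) '' {j : ℕ | ∀ i ≤ j, (A ^ i).IsPartialIsometry})

/-- The *ascent* `a(A)`: the smallest nonnegative integer `k` with `ker A^k = ker A^(k+1)`. -/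
def Matrix.ascent {ι : Type*} [Fintype ι] [DecidableEq ι] (A : Matrix ι ι ℂ) : ℕ :=
  sInf {k : ℕ | LinearMap.ker (Matrix.toEuclideanLin (A ^ k)) =
    LinearMap.ker (Matrix.toEuclideanLin (A ^ (k + 1)))}

/-- `A` is unitarily similar to `B` (allowing different, necessarily equipotent, index types):
`B = U* A U` for some unitary `U`. -/
def Matrix.UnitarilySimilarTo {ι κ : Type*} [Fintype ι] [Fintype κ] [DecidableEq ι]
    [DecidableEq κ] (A : Matrix ι ι ℂ) (B : Matrix κ κ ℂ) : Prop :=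
  ∃ U : Matrix ι κ ℂ, Uᴴ * U = 1 ∧ U * Uᴴ = 1 ∧ B = Uᴴ * A * U

/-- The `q`-by-`q` nilpotent Jordan block `J_q`. -/
def JordanBlock (q : ℕ) : Matrix (Fin q) (Fin q) ℂ :=
  Matrix.of fun a b => if (b : ℕ) = (a : ℕ) + 1 then 1 else 0

/-- `A` is of class `S_n`: a contraction whose eigenvalues all have moduli strictly
less than `1` and with `rank (1 - A*A) = 1`. -/
def Matrix.IsClassSn {n : ℕ} (A : Matrix (Fin n) (Fin n) ℂ) : Prop :=
  (∀ x : EuclideanSpace ℂ (Fin n), ‖Matrix.toEuclideanLin A x‖ ≤ ‖x‖) ∧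
  (∀ z ∈ spectrum ℂ A, ‖z‖ < 1) ∧
  (1 - Aᴴ * A).rank = 1

/-!
A partial isometry `f` is isometric exactly on `(ker f)ᗮ` (Pythagoras). Let `a` be the ascent of
`A`, so `ker A^a = ker A^(a+1)`. Since `A^a` and `A^(a+1)` are partial isometries with the same
kernel, `A` is isometric on the range of `A^a`, so that range lies in `(ker A)ᗮ`. Then
`A^(m+1) = A ∘ A^m` with `range A^m ⊆ range A^a ⊆ (ker A)ᗮ`, and a composition `f ∘ g` of partial
isometries with `range g ⊆ (ker f)ᗮ` is again a partial isometry; induction from `m = a` covers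
all powers beyond `j`.
-/

namespace LinearMap

variable {𝕜 E F : Type*} [RCLike 𝕜] [NormedAddCommGroup E] [InnerProductSpace 𝕜 E]
  [NormedAddCommGroup F] [InnerProductSpace 𝕜 F]

def IsPartialIsometry (f : E →ₗ[𝕜] F) : Prop :=
  ∀ x ∈ (ker f)ᗮ, ‖f x‖ = ‖x‖

theorem isPartialIsometry_one : IsPartialIsometry (1 : Module.End 𝕜 E) :=
  fun _ _ ↦ rfl

namespace IsPartialIsometry

variable {f : E →ₗ[𝕜] F}

/-- Pythagoras: `‖x‖² = ‖u‖² + ‖f x‖²` for the component `u` of `x` in `ker f`. -/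
theorem mem_ker_orthogonal_of_norm_map_eq [(ker f).HasOrthogonalProjection]
    (hf : IsPartialIsometry f) {x : E} (hx : ‖f x‖ = ‖x‖) : x ∈ (ker f)ᗮ := by
  obtain ⟨u, hu, v, hv, rfl⟩ := (ker f).exists_add_mem_mem_orthogonal x
  have hfuv : ‖f (u + v)‖ = ‖v‖ := by rw [map_add, mem_ker.mp hu, zero_add, hf v hv]
  have hpyth : ‖u + v‖ * ‖u + v‖ = ‖u‖ * ‖u‖ + ‖v‖ * ‖v‖ :=
    norm_add_sq_eq_norm_sq_add_norm_sq_of_inner_eq_zero u v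
      (Submodule.inner_right_of_mem_orthogonal hu hv)
  have hu0 : u = 0 := by
    rw [hfuv] at hx
    rw [← hx] at hpyth
    simpa using hpyth
  simpa [hu0] using hv

variable {G : Type*} [NormedAddCommGroup G] [InnerProductSpace 𝕜 G] {g : G →ₗ[𝕜] E}

theorem comp (hf : IsPartialIsometry f) (hg : IsPartialIsometry g)
    (hrange : ∀ x, g x ∈ (ker f)ᗮ) : IsPartialIsometry (f ∘ₗ g) := by
  have hker : ker (f ∘ₗ g) = ker g := by
    refine le_antisymm (fun x hx ↦ ?_) (ker_le_ker_comp g f)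
    exact mem_ker.mpr <| Submodule.disjoint_def.mp (ker f).orthogonal_disjoint _ hx (hrange x)
  intro x hx
  rw [hker] at hx
  rw [comp_apply, hf _ (hrange x), hg x hx]

/-- For `v ∈ (ker g)ᗮ = (ker (f ∘ g))ᗮ` we get `‖f (g v)‖ = ‖v‖ = ‖g v‖`. -/
theorem map_mem_ker_orthogonal [(ker f).HasOrthogonalProjection]
    [(ker g).HasOrthogonalProjection] (hf : IsPartialIsometry f) (hg : IsPartialIsometry g)
    (hfg : IsPartialIsometry (f ∘ₗ g)) (hker : ker (f ∘ₗ g) = ker g) (w : G) :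
    g w ∈ (ker f)ᗮ := by
  obtain ⟨u, hu, v, hv, rfl⟩ := (ker g).exists_add_mem_mem_orthogonal w
  rw [map_add, mem_ker.mp hu, zero_add]
  refine hf.mem_ker_orthogonal_of_norm_map_eq ?_
  rw [← comp_apply, hfg v (hker ▸ hv), hg v hv]

end IsPartialIsometry

theorem IsPartialIsometry.pow_of_le [FiniteDimensional 𝕜 E] {f : Module.End 𝕜 E} {a : ℕ}
    (hf : IsPartialIsometry f) (ha : IsPartialIsometry (f ^ a))
    (ha' : IsPartialIsometry (f ^ (a + 1))) (hker : ker (f ^ a) = ker (f ^ (a + 1))) :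
    ∀ m, a ≤ m → IsPartialIsometry (f ^ m) := by
  have hrange : ∀ x, (f ^ a) x ∈ (ker f)ᗮ :=
    hf.map_mem_ker_orthogonal ha (by rwa [← Module.End.mul_eq_comp, ← pow_succ'])
      (by rw [← Module.End.mul_eq_comp, ← pow_succ', hker])
  refine Nat.le_induction ha fun m ham hm ↦ ?_
  have hrange_m : ∀ x, (f ^ m) x ∈ (ker f)ᗮ := fun x ↦ by
    rw [← Nat.add_sub_cancel' ham, pow_add, Module.End.mul_apply]
    exact hrange _
  rw [pow_succ', Module.End.mul_eq_comp]
  exact hf.comp hm hrange_m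

end LinearMap

namespace Matrix

variable {ι : Type*} [Fintype ι] [DecidableEq ι]

theorem toEuclideanLin_pow {𝕜 : Type*} [RCLike 𝕜] (A : Matrix ι ι 𝕜) (k : ℕ) :
    toEuclideanLin (A ^ k) = toEuclideanLin A ^ k := by
  rw [← coe_toEuclideanCLM_eq_toEuclideanLin, map_pow, ContinuousLinearMap.toLinearMap_pow,
    coe_toEuclideanCLM_eq_toEuclideanLin]

theorem isPartialIsometry_pow_iff (A : Matrix ι ι ℂ) (k : ℕ) :
    (A ^ k).IsPartialIsometry ↔ (toEuclideanLin A ^ k).IsPartialIsometry := by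
  rw [IsPartialIsometry, toEuclideanLin_pow]; rfl

theorem ker_pow_ascent_eq_ker_pow_succ (A : Matrix ι ι ℂ) :
    LinearMap.ker (toEuclideanLin A ^ A.ascent) =
      LinearMap.ker (toEuclideanLin A ^ (A.ascent + 1)) := by
  obtain ⟨k, -, hk⟩ := Module.End.exists_ker_pow_eq_ker_pow_succ (toEuclideanLin A)
  have hmem := Nat.sInf_mem (s := {k | LinearMap.ker (toEuclideanLin (A ^ k)) =
    LinearMap.ker (toEuclideanLin (A ^ (k + 1)))}) ⟨k, by simpa [toEuclideanLin_pow] using hk⟩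
  rw [ascent, ← toEuclideanLin_pow, ← toEuclideanLin_pow]
  exact hmem

end Matrix

/-- If `j > a(A)` and `A, A², …, A^j` are all partial isometries, then `A^ℓ` is a partial
isometry for every `ℓ ≥ 1`. -/
theorem isPartialIsometry_pow_of_gt_ascent (n : ℕ) (A : Matrix (Fin n) (Fin n) ℂ)
    (j : ℕ) (hj : A.ascent < j) (h : ∀ i : ℕ, 1 ≤ i → i ≤ j → (A ^ i).IsPartialIsometry) :
    ∀ ℓ : ℕ, 1 ≤ ℓ → (A ^ ℓ).IsPartialIsometry := by
  have hpow : ∀ i, 1 ≤ i → i ≤ j → (toEuclideanLin A ^ i).IsPartialIsometry :=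
    fun i h1 h2 ↦ (A.isPartialIsometry_pow_iff i).mp (h i h1 h2)
  have hascent : (toEuclideanLin A ^ A.ascent).IsPartialIsometry := by
    rcases Nat.eq_zero_or_pos A.ascent with h0 | h0
    · rw [h0, pow_zero]; exact LinearMap.isPartialIsometry_one
    · exact hpow _ h0 hj.le
  have hstable := LinearMap.IsPartialIsometry.pow_of_le
    (by simpa using hpow 1 le_rfl (by omega)) hascent (hpow _ (by omega) hj)
    A.ker_pow_ascent_eq_ker_pow_succ
  intro ℓ hℓ
  rcases le_or_gt ℓ j with hle | hgt
  · exact h ℓ hℓ hle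
  · exact (A.isPartialIsometry_pow_iff ℓ).mpr (hstable ℓ (by omega))

end
end

section
/- Let A′ be the n-by-n upper-triangular block matrix on ℂ^{n₁} ⊕ ⋯ ⊕ ℂ^{n_j} ⊕ ℂ^m whose (ℓ, ℓ+1) block is A_ℓ for 1 ≤ ℓ ≤ j − 1, whose (j, j+1) block is B, whose (j+1, j+1) block is C, and all of whose other blocks are zero, where A_ℓ*A_ℓ = I_{n_{ℓ+1}} for 1 ≤ ℓ ≤ j − 1 and B*B + C*C = I_m. Then for every integer ℓ ≥ 0, the power A′^{j+ℓ} is a partial isometry if and only if C^ℓ is a partial isometry. -/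
open Matrix

noncomputable section

/-!
`T` is a partial isometry iff `T* T` is idempotent. Grade the coordinates by block, with `ℂ^m`
at the top level `j`. Then `A'` maps level `ℓ + 1` into level `ℓ` and the top level into levels
`j - 1` and `j`, and the relations `A_ℓ* A_ℓ = I`, `B* B + C* C = I` say that the columns of each
positive level are orthonormal. Hence `(A'^k)* A'^k` is the projection onto the levels `≥ k` for
`k ≤ j`, i.e. onto `ℂ^m` for `k = j`. As `A'` is block upper triangular with corner `C`, this gives
`(A'^(j+ℓ))* A'^(j+ℓ) = 0 ⊕ (C^ℓ)* C^ℓ`.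
-/

open scoped InnerProductSpace

namespace ContinuousLinearMap

variable {𝕜 H K : Type*} [RCLike 𝕜] [NormedAddCommGroup H] [InnerProductSpace 𝕜 H]
  [NormedAddCommGroup K] [InnerProductSpace 𝕜 K]

def IsPartialIsometry (T : H →L[𝕜] K) : Prop :=
  ∀ x ∈ (LinearMap.ker (T : H →ₗ[𝕜] K))ᗮ, ‖T x‖ = ‖x‖

lemma IsPartialIsometry.inner_map_map {T : H →L[𝕜] K} (hT : T.IsPartialIsometry) {x y : H}
    (hx : x ∈ (LinearMap.ker (T : H →ₗ[𝕜] K))ᗮ) (hy : y ∈ (LinearMap.ker (T : H →ₗ[𝕜] K))ᗮ) :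
    ⟪T x, T y⟫_𝕜 = ⟪x, y⟫_𝕜 :=
  let U : (LinearMap.ker (T : H →ₗ[𝕜] K))ᗮ →ₗᵢ[𝕜] K :=
    ⟨(T : H →ₗ[𝕜] K) ∘ₗ (LinearMap.ker (T : H →ₗ[𝕜] K))ᗮ.subtype, fun z => hT z z.2⟩
  U.inner_map_map ⟨x, hx⟩ ⟨y, hy⟩

variable [CompleteSpace H] [CompleteSpace K]

lemma adjoint_apply_mem_orthogonal_ker (T : H →L[𝕜] K) (y : K) :
    adjoint T y ∈ (LinearMap.ker (T : H →ₗ[𝕜] K))ᗮ := fun x hx => by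
  rw [adjoint_inner_right, show T x = 0 from hx, inner_zero_left]

lemma IsPartialIsometry.adjoint_apply_apply {T : H →L[𝕜] K} (hT : T.IsPartialIsometry) {x : H}
    (hx : x ∈ (LinearMap.ker (T : H →ₗ[𝕜] K))ᗮ) : adjoint T (T x) = x := by
  have hmem : adjoint T (T x) - x ∈ (LinearMap.ker (T : H →ₗ[𝕜] K))ᗮ :=
    Submodule.sub_mem _ (T.adjoint_apply_mem_orthogonal_ker _) hx
  have hperp : adjoint T (T x) - x ∈ (LinearMap.ker (T : H →ₗ[𝕜] K))ᗮᗮ := fun y hy => by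
    rw [inner_sub_right, adjoint_inner_right, hT.inner_map_map hy hx, sub_self]
  simpa [sub_eq_zero] using
    (Submodule.inf_orthogonal_eq_bot (LinearMap.ker (T : H →ₗ[𝕜] K))ᗮ).le ⟨hmem, hperp⟩

theorem isIdempotentElem_adjoint_comp_self_iff (T : H →L[𝕜] K) :
    IsIdempotentElem (adjoint T ∘L T) ↔ T.IsPartialIsometry := by
  constructor
  · intro hP x hx
    have hP' : ∀ z, adjoint T (T (adjoint T (T z))) = adjoint T (T z) :=
      fun z => DFunLike.congr_fun hP.eq z
    have hker : adjoint T (T x) - x ∈ LinearMap.ker (T : H →ₗ[𝕜] K) := by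
      rw [LinearMap.mem_ker, ContinuousLinearMap.coe_coe, ← inner_self_eq_zero (𝕜 := 𝕜),
        ← adjoint_inner_right]
      simp only [map_sub, hP', sub_self, inner_zero_right]
    have hinner : ⟪T x, T x⟫_𝕜 = ⟪x, x⟫_𝕜 := by
      rw [← adjoint_inner_right, ← sub_eq_zero, ← inner_sub_right]
      exact inner_eq_zero_symm.mp (hx _ hker)
    rw [inner_self_eq_norm_sq_to_K, inner_self_eq_norm_sq_to_K] at hinner
    exact (sq_eq_sq₀ (norm_nonneg _) (norm_nonneg _)).mp (by exact_mod_cast hinner)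
  · intro hT
    refine ContinuousLinearMap.ext fun x => ?_
    exact hT.adjoint_apply_apply (T.adjoint_apply_mem_orthogonal_ker _)

end ContinuousLinearMap

namespace Matrix

theorem isPartialIsometry_iff_isIdempotentElem {ι : Type*} [Fintype ι] [DecidableEq ι]
    (M : Matrix ι ι ℂ) : M.IsPartialIsometry ↔ IsIdempotentElem (Mᴴ * M) := by
  have hmap : IsIdempotentElem (Mᴴ * M) ↔ IsIdempotentElem (toEuclideanCLM (𝕜 := ℂ) (Mᴴ * M)) :=
    ⟨fun h => h.map _, fun h => by simpa using h.map (toEuclideanCLM (𝕜 := ℂ) (n := ι)).symm⟩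
  rw [hmap, map_mul, ← star_eq_conjTranspose, map_star, ContinuousLinearMap.star_eq_adjoint,
    ContinuousLinearMap.mul_def, ContinuousLinearMap.isIdempotentElem_adjoint_comp_self_iff]
  rfl

section Levels

variable {ι R : Type*} [Semiring R]

/-- Each column at level `ℓ + 1 < j` is supported at level `ℓ`, each column at level `j` at levels
`≥ j - 1`, and all other columns vanish. -/
def IsTruncatedShift (lvl : ι → ℕ) (j : ℕ) (A : Matrix ι ι R) : Prop :=
  ∀ r c, A r c ≠ 0 → lvl c = min (lvl r + 1) j

variable [DecidableEq ι]

def levelProj (lvl : ι → ℕ) (k : ℕ) : Matrix ι ι R :=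
  diagonal fun i => if k ≤ lvl i then 1 else 0

variable {lvl : ι → ℕ} {j : ℕ} {A : Matrix ι ι R}

lemma levelProj_zero : levelProj lvl 0 = (1 : Matrix ι ι R) := by
  simp [levelProj]

lemma levelProj_apply (k : ℕ) (c c' : ι) :
    (levelProj lvl k : Matrix ι ι R) c c' = if k ≤ lvl c then (1 : Matrix ι ι R) c c' else 0 := by
  by_cases h : c = c' <;> simp [levelProj, one_apply, h]

variable [Fintype ι] [StarRing R]

namespace IsTruncatedShift

lemma conjTranspose_mul_self_eq_levelProj (hA : IsTruncatedShift lvl j A) (hj : 0 < j)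
    (horth : ∀ c c', 1 ≤ lvl c → lvl c = lvl c' → (Aᴴ * A) c c' = (1 : Matrix ι ι R) c c') :
    Aᴴ * A = levelProj lvl 1 := by
  ext c c'
  rw [levelProj_apply]
  by_cases hc : 1 ≤ lvl c
  · by_cases hcc' : lvl c = lvl c'
    · rw [if_pos hc, horth c c' hc hcc']
    · rw [if_pos hc, one_apply_ne (fun h => hcc' (congrArg lvl h)), mul_apply]
      refine Finset.sum_eq_zero fun r _ => ?_
      by_cases hrc : A r c = 0
      · simp [hrc]
      by_cases hrc' : A r c' = 0
      · simp [hrc']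
      exact absurd ((hA r c hrc).trans (hA r c' hrc').symm) hcc'
  · rw [if_neg hc, mul_apply]
    refine Finset.sum_eq_zero fun r _ => ?_
    by_cases hrc : A r c = 0
    · simp [hrc]
    have := hA r c hrc
    omega

lemma conjTranspose_mul_levelProj_mul (hA : IsTruncatedShift lvl j A)
    (h1 : Aᴴ * A = levelProj lvl 1) {k : ℕ} (hk : k < j) :
    Aᴴ * levelProj lvl k * A = levelProj lvl (k + 1) := by
  ext c c'
  have hterm : ∀ r, star (A r c) * (if k ≤ lvl r then 1 else 0) * A r c' =
      (if k + 1 ≤ lvl c then 1 else 0) * (star (A r c) * A r c') := by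
    intro r
    by_cases hrc : A r c = 0
    · simp [hrc]
    have := hA r c hrc
    split_ifs <;> first | omega | simp
  calc (Aᴴ * levelProj lvl k * A : Matrix ι ι R) c c'
      = ∑ r, star (A r c) * (if k ≤ lvl r then 1 else 0) * A r c' := by
        rw [levelProj, mul_apply]
        simp only [mul_diagonal, conjTranspose_apply]
    _ = ∑ r, (if k + 1 ≤ lvl c then 1 else 0) * (star (A r c) * A r c') :=
        Finset.sum_congr rfl fun r _ => hterm r
    _ = (if k + 1 ≤ lvl c then 1 else 0) * (Aᴴ * A) c c' := by
        rw [← Finset.mul_sum, mul_apply]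
        simp only [conjTranspose_apply]
    _ = levelProj lvl (k + 1) c c' := by
        rw [h1, levelProj_apply, levelProj_apply]
        split_ifs <;> first | omega | simp

lemma conjTranspose_pow_mul_pow (hA : IsTruncatedShift lvl j A)
    (h1 : Aᴴ * A = levelProj lvl 1) {k : ℕ} (hk : k ≤ j) :
    (A ^ k)ᴴ * A ^ k = levelProj lvl k := by
  induction k with
  | zero => simp [levelProj_zero]
  | succ k ih =>
    rw [pow_succ, conjTranspose_mul, Matrix.mul_assoc, ← Matrix.mul_assoc _ (A ^ k),
      ih (by omega), ← Matrix.mul_assoc, hA.conjTranspose_mul_levelProj_mul h1 (by omega)]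

end IsTruncatedShift

end Levels

section Blocks

variable {α β R : Type*} [Fintype α] [Fintype β] [Semiring R]

lemma isIdempotentElem_fromBlocks_zero_zero_zero_iff (N : Matrix β β R) :
    IsIdempotentElem (fromBlocks 0 0 0 N : Matrix (α ⊕ β) (α ⊕ β) R) ↔ IsIdempotentElem N := by
  simp [IsIdempotentElem, fromBlocks_multiply]

variable [StarRing R]

lemma conjTranspose_mul_fromBlocks_zero_mul_of_toBlocks₂₁_eq_zero
    {M : Matrix (α ⊕ β) (α ⊕ β) R} (hM : M.toBlocks₂₁ = 0) (N : Matrix β β R) :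
    Mᴴ * fromBlocks 0 0 0 N * M = fromBlocks 0 0 0 (M.toBlocks₂₂ᴴ * N * M.toBlocks₂₂) := by
  conv_lhs => rw [← fromBlocks_toBlocks M, hM]
  simp [fromBlocks_conjTranspose, fromBlocks_multiply, Matrix.mul_assoc]

lemma conjTranspose_pow_mul_fromBlocks_zero_mul_pow_of_toBlocks₂₁_eq_zero [DecidableEq α]
    [DecidableEq β] {M : Matrix (α ⊕ β) (α ⊕ β) R} (hM : M.toBlocks₂₁ = 0) (N : Matrix β β R)
    (ℓ : ℕ) :
    (M ^ ℓ)ᴴ * fromBlocks 0 0 0 N * M ^ ℓ =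
      fromBlocks 0 0 0 ((M.toBlocks₂₂ ^ ℓ)ᴴ * N * M.toBlocks₂₂ ^ ℓ) := by
  induction ℓ with
  | zero => simp
  | succ ℓ ih =>
    calc (M ^ (ℓ + 1))ᴴ * fromBlocks 0 0 0 N * M ^ (ℓ + 1)
        = Mᴴ * ((M ^ ℓ)ᴴ * fromBlocks 0 0 0 N * M ^ ℓ) * M := by
          simp only [pow_succ, conjTranspose_mul, Matrix.mul_assoc]
      _ = fromBlocks 0 0 0 ((M.toBlocks₂₂ ^ (ℓ + 1))ᴴ * N * M.toBlocks₂₂ ^ (ℓ + 1)) := by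
          rw [ih, conjTranspose_mul_fromBlocks_zero_mul_of_toBlocks₂₁_eq_zero hM]
          simp only [pow_succ, conjTranspose_mul, Matrix.mul_assoc]

end Blocks

end Matrix

section BlockForm

open Matrix

variable {R : Type*} [Semiring R] {j m : ℕ} {ns : Fin j → ℕ}
  {A' : Matrix ((Σ ℓ : Fin j, Fin (ns ℓ)) ⊕ Fin m) ((Σ ℓ : Fin j, Fin (ns ℓ)) ⊕ Fin m) R}

/-- The paper's block `ℓ + 1` sits at level `ℓ`, and the last summand at level `j`. -/
def blockLevel (j m : ℕ) (ns : Fin j → ℕ) : (Σ ℓ : Fin j, Fin (ns ℓ)) ⊕ Fin m → ℕ :=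
  Sum.elim (fun s => s.1) (fun _ => j)

lemma levelProj_blockLevel_self :
    (levelProj (blockLevel j m ns) j : Matrix _ _ R) = fromBlocks 0 0 0 1 := by
  ext (⟨ℓ, a⟩ | a) (⟨ℓ', b⟩ | b) <;> simp [levelProj_apply, blockLevel, one_apply]

lemma isTruncatedShift_blockLevel_of_blockForm
    (hblk₂ : ∀ (ℓ ℓ' : Fin j) (a : Fin (ns ℓ)) (b : Fin (ns ℓ')), (ℓ' : ℕ) ≠ (ℓ : ℕ) + 1 →
      A' (Sum.inl ⟨ℓ, a⟩) (Sum.inl ⟨ℓ', b⟩) = 0)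
    (hblk₄ : ∀ (ℓ : Fin j), (ℓ : ℕ) ≠ j - 1 → ∀ (a : Fin (ns ℓ)) (b : Fin m),
      A' (Sum.inl ⟨ℓ, a⟩) (Sum.inr b) = 0)
    (hblk₆ : ∀ (a : Fin m) (ℓ : Fin j) (b : Fin (ns ℓ)), A' (Sum.inr a) (Sum.inl ⟨ℓ, b⟩) = 0) :
    IsTruncatedShift (blockLevel j m ns) j A' := by
  rintro (⟨ℓ, a⟩ | a) (⟨ℓ', b⟩ | b) hne <;> simp only [blockLevel, Sum.elim_inl, Sum.elim_inr]
  · have := ℓ'.isLt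
    by_contra h
    exact hne (hblk₂ ℓ ℓ' a b (by omega))
  · have := ℓ.isLt
    by_contra h
    exact hne (hblk₄ ℓ (by omega) a b)
  · exact absurd (hblk₆ a ℓ' b) hne
  · omega

variable [StarRing R]

lemma conjTranspose_mul_self_apply_inr_inr_of_blockForm (hj : 0 < j)
    (B : Matrix (Fin (ns ⟨j - 1, Nat.sub_lt hj Nat.one_pos⟩)) (Fin m) R)
    (C : Matrix (Fin m) (Fin m) R)
    (hblk₃ : ∀ (a : Fin (ns ⟨j - 1, Nat.sub_lt hj Nat.one_pos⟩)) (b : Fin m),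
      A' (Sum.inl ⟨⟨j - 1, Nat.sub_lt hj Nat.one_pos⟩, a⟩) (Sum.inr b) = B a b)
    (hblk₄ : ∀ (ℓ : Fin j), (ℓ : ℕ) ≠ j - 1 → ∀ (a : Fin (ns ℓ)) (b : Fin m),
      A' (Sum.inl ⟨ℓ, a⟩) (Sum.inr b) = 0)
    (hblk₅ : ∀ a b : Fin m, A' (Sum.inr a) (Sum.inr b) = C a b) (b b' : Fin m) :
    (A'ᴴ * A') (Sum.inr b) (Sum.inr b') = (Bᴴ * B + Cᴴ * C) b b' := by
  rw [mul_apply, Fintype.sum_sum_type, Fintype.sum_sigma,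
    Finset.sum_eq_single_of_mem ⟨j - 1, Nat.sub_lt hj Nat.one_pos⟩ (Finset.mem_univ _)]
  · simp [hblk₃, hblk₅, mul_apply]
  · intro ℓ _ hℓ
    refine Finset.sum_eq_zero fun a _ => ?_
    rw [hblk₄ ℓ (fun h => hℓ (Fin.ext h))]
    simp

lemma conjTranspose_mul_self_apply_inl_inl_of_blockForm (As : ∀ (ℓ : Fin j) (h : (ℓ : ℕ) + 1 < j),
      Matrix (Fin (ns ℓ)) (Fin (ns ⟨(ℓ : ℕ) + 1, h⟩)) R)
    (hblk₁ : ∀ (ℓ : Fin j) (h : (ℓ : ℕ) + 1 < j) (a : Fin (ns ℓ))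
      (b : Fin (ns ⟨(ℓ : ℕ) + 1, h⟩)),
      A' (Sum.inl ⟨ℓ, a⟩) (Sum.inl ⟨⟨(ℓ : ℕ) + 1, h⟩, b⟩) = As ℓ h a b)
    (hblk₂ : ∀ (ℓ ℓ' : Fin j) (a : Fin (ns ℓ)) (b : Fin (ns ℓ')), (ℓ' : ℕ) ≠ (ℓ : ℕ) + 1 →
      A' (Sum.inl ⟨ℓ, a⟩) (Sum.inl ⟨ℓ', b⟩) = 0)
    (hblk₆ : ∀ (a : Fin m) (ℓ : Fin j) (b : Fin (ns ℓ)), A' (Sum.inr a) (Sum.inl ⟨ℓ, b⟩) = 0)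
    (ℓ : Fin j) (h : (ℓ : ℕ) + 1 < j) (b b' : Fin (ns ⟨(ℓ : ℕ) + 1, h⟩)) :
    (A'ᴴ * A') (Sum.inl ⟨⟨ℓ + 1, h⟩, b⟩) (Sum.inl ⟨⟨ℓ + 1, h⟩, b'⟩) =
      ((As ℓ h)ᴴ * As ℓ h) b b' := by
  rw [mul_apply, Fintype.sum_sum_type, Fintype.sum_sigma,
    Finset.sum_eq_single_of_mem ℓ (Finset.mem_univ _)]
  · simp [hblk₁, hblk₆, mul_apply]
  · intro ℓ' _ hℓ'
    refine Finset.sum_eq_zero fun a _ => ?_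
    rw [hblk₂ ℓ' _ a b' (fun h => hℓ' (Fin.ext (by simp at h; omega)))]
    simp

lemma conjTranspose_mul_self_eq_levelProj_of_blockForm (hj : 0 < j)
    (As : ∀ (ℓ : Fin j) (h : (ℓ : ℕ) + 1 < j),
      Matrix (Fin (ns ℓ)) (Fin (ns ⟨(ℓ : ℕ) + 1, h⟩)) R)
    (B : Matrix (Fin (ns ⟨j - 1, Nat.sub_lt hj Nat.one_pos⟩)) (Fin m) R)
    (C : Matrix (Fin m) (Fin m) R)
    (hAs : ∀ (ℓ : Fin j) (h : (ℓ : ℕ) + 1 < j), (As ℓ h)ᴴ * As ℓ h = 1)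
    (hBC : Bᴴ * B + Cᴴ * C = 1)
    (hblk₁ : ∀ (ℓ : Fin j) (h : (ℓ : ℕ) + 1 < j) (a : Fin (ns ℓ))
      (b : Fin (ns ⟨(ℓ : ℕ) + 1, h⟩)),
      A' (Sum.inl ⟨ℓ, a⟩) (Sum.inl ⟨⟨(ℓ : ℕ) + 1, h⟩, b⟩) = As ℓ h a b)
    (hblk₂ : ∀ (ℓ ℓ' : Fin j) (a : Fin (ns ℓ)) (b : Fin (ns ℓ')), (ℓ' : ℕ) ≠ (ℓ : ℕ) + 1 →
      A' (Sum.inl ⟨ℓ, a⟩) (Sum.inl ⟨ℓ', b⟩) = 0)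
    (hblk₃ : ∀ (a : Fin (ns ⟨j - 1, Nat.sub_lt hj Nat.one_pos⟩)) (b : Fin m),
      A' (Sum.inl ⟨⟨j - 1, Nat.sub_lt hj Nat.one_pos⟩, a⟩) (Sum.inr b) = B a b)
    (hblk₄ : ∀ (ℓ : Fin j), (ℓ : ℕ) ≠ j - 1 → ∀ (a : Fin (ns ℓ)) (b : Fin m),
      A' (Sum.inl ⟨ℓ, a⟩) (Sum.inr b) = 0)
    (hblk₅ : ∀ a b : Fin m, A' (Sum.inr a) (Sum.inr b) = C a b)
    (hblk₆ : ∀ (a : Fin m) (ℓ : Fin j) (b : Fin (ns ℓ)), A' (Sum.inr a) (Sum.inl ⟨ℓ, b⟩) = 0) :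
    A'ᴴ * A' = levelProj (blockLevel j m ns) 1 := by
  refine (isTruncatedShift_blockLevel_of_blockForm hblk₂ hblk₄ hblk₆).conjTranspose_mul_self_eq_levelProj hj
    fun c c' hc hcc' => ?_
  rcases c with ⟨q, b⟩ | b <;> rcases c' with ⟨q', b'⟩ | b' <;>
    simp only [blockLevel, Sum.elim_inl, Sum.elim_inr] at hc hcc'
  · obtain rfl : q = q' := Fin.ext hcc'
    obtain ⟨p, hp, rfl⟩ : ∃ (p : Fin j) (hp : (p : ℕ) + 1 < j), q = ⟨p + 1, hp⟩ :=
      ⟨⟨q - 1, by omega⟩, by simp; omega, Fin.ext (by simp; omega)⟩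
    rw [conjTranspose_mul_self_apply_inl_inl_of_blockForm As hblk₁ hblk₂ hblk₆, hAs]
    by_cases hbb : b = b' <;> simp [one_apply, hbb]
  · omega
  · omega
  · rw [conjTranspose_mul_self_apply_inr_inr_of_blockForm hj B C hblk₃ hblk₄ hblk₅, hBC]
    by_cases hbb : b = b' <;> simp [one_apply, hbb]

end BlockForm

/-- For the block matrix `A'` on `ℂ^{n₁} ⊕ ⋯ ⊕ ℂ^{n_j} ⊕ ℂ^m` with superdiagonal blocks
`A₁, …, A_{j-1}` (with `A_ℓ* A_ℓ = I`), `(j, j+1)` block `B`, `(j+1, j+1)` block `C`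
(with `B*B + C*C = I`), and all other blocks zero: for every `ℓ ≥ 0`, `A'^(j+ℓ)` is a
partial isometry if and only if `C^ℓ` is one. (Block rows/columns are indexed by
`Fin j ⊕ Fin m`-style indices, `0`-based, so the paper's block `ℓ` is index `ℓ - 1`.) -/
theorem pow_isPartialIsometry_iff_of_blockForm (j m : ℕ) (hj : 0 < j) (ns : Fin j → ℕ)
    (A' : Matrix ((Σ ℓ : Fin j, Fin (ns ℓ)) ⊕ Fin m) ((Σ ℓ : Fin j, Fin (ns ℓ)) ⊕ Fin m) ℂ)
    (As : ∀ (ℓ : Fin j) (h : (ℓ : ℕ) + 1 < j),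
      Matrix (Fin (ns ℓ)) (Fin (ns ⟨(ℓ : ℕ) + 1, h⟩)) ℂ)
    (B : Matrix (Fin (ns ⟨j - 1, Nat.sub_lt hj Nat.one_pos⟩)) (Fin m) ℂ)
    (C : Matrix (Fin m) (Fin m) ℂ)
    (hAs : ∀ (ℓ : Fin j) (h : (ℓ : ℕ) + 1 < j), (As ℓ h)ᴴ * As ℓ h = 1)
    (hBC : Bᴴ * B + Cᴴ * C = 1)
    (hblk₁ : ∀ (ℓ : Fin j) (h : (ℓ : ℕ) + 1 < j) (a : Fin (ns ℓ))
      (b : Fin (ns ⟨(ℓ : ℕ) + 1, h⟩)),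
      A' (Sum.inl ⟨ℓ, a⟩) (Sum.inl ⟨⟨(ℓ : ℕ) + 1, h⟩, b⟩) = As ℓ h a b)
    (hblk₂ : ∀ (ℓ ℓ' : Fin j) (a : Fin (ns ℓ)) (b : Fin (ns ℓ')), (ℓ' : ℕ) ≠ (ℓ : ℕ) + 1 →
      A' (Sum.inl ⟨ℓ, a⟩) (Sum.inl ⟨ℓ', b⟩) = 0)
    (hblk₃ : ∀ (a : Fin (ns ⟨j - 1, Nat.sub_lt hj Nat.one_pos⟩)) (b : Fin m),
      A' (Sum.inl ⟨⟨j - 1, Nat.sub_lt hj Nat.one_pos⟩, a⟩) (Sum.inr b) = B a b)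
    (hblk₄ : ∀ (ℓ : Fin j), (ℓ : ℕ) ≠ j - 1 → ∀ (a : Fin (ns ℓ)) (b : Fin m),
      A' (Sum.inl ⟨ℓ, a⟩) (Sum.inr b) = 0)
    (hblk₅ : ∀ a b : Fin m, A' (Sum.inr a) (Sum.inr b) = C a b)
    (hblk₆ : ∀ (a : Fin m) (ℓ : Fin j) (b : Fin (ns ℓ)), A' (Sum.inr a) (Sum.inl ⟨ℓ, b⟩) = 0) :
    ∀ ℓ : ℕ, (A' ^ (j + ℓ)).IsPartialIsometry ↔ (C ^ ℓ).IsPartialIsometry := by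
  intro ℓ
  have htop : (A' ^ j)ᴴ * A' ^ j = fromBlocks 0 0 0 1 := by
    rw [(isTruncatedShift_blockLevel_of_blockForm hblk₂ hblk₄ hblk₆).conjTranspose_pow_mul_pow
      (conjTranspose_mul_self_eq_levelProj_of_blockForm hj As B C hAs hBC hblk₁ hblk₂ hblk₃ hblk₄
        hblk₅ hblk₆) le_rfl, levelProj_blockLevel_self]
  have h₂₁ : A'.toBlocks₂₁ = 0 := by
    ext a ⟨ℓ, b⟩
    exact hblk₆ a ℓ b
  have h₂₂ : A'.toBlocks₂₂ = C := by
    ext a b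
    exact hblk₅ a b
  have hgram : (A' ^ (j + ℓ))ᴴ * A' ^ (j + ℓ) = fromBlocks 0 0 0 ((C ^ ℓ)ᴴ * C ^ ℓ) := by
    calc (A' ^ (j + ℓ))ᴴ * A' ^ (j + ℓ) = (A' ^ ℓ)ᴴ * ((A' ^ j)ᴴ * A' ^ j) * A' ^ ℓ := by
          simp only [pow_add, conjTranspose_mul, Matrix.mul_assoc]
      _ = fromBlocks 0 0 0 ((C ^ ℓ)ᴴ * C ^ ℓ) := by
          rw [htop, conjTranspose_pow_mul_fromBlocks_zero_mul_pow_of_toBlocks₂₁_eq_zero h₂₁, h₂₂,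
            Matrix.mul_one]
  rw [isPartialIsometry_iff_isIdempotentElem, isPartialIsometry_iff_isIdempotentElem, hgram,
    isIdempotentElem_fromBlocks_zero_zero_zero_iff]


end
end
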